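/- arXiv:2305.03594 — 2 statements merged into one kernel-verified Lean document; each statement's English description precedes it below -/
import Mathlib

section
/- Let X be a nonempty set, let U and V be real Banach spaces whose elements are real-valued functions on X and such that for every x ∈ X the evaluation maps w ↦ w(x) are continuous linear functionals on U and on V. Let T : dom(T) ⊆ U → V be a closed linear operator, let (Ω, Σ, P) be a probability space, let u : Ω → U satisfy u(ω) ∈ dom(T) P-a.s., and set v(ω) := T(u(ω)). Suppose ∫_Ω ‖u(ω)‖_U² dP(ω) < ∞ and ∫_Ω ‖v(ω)‖_V² dP(ω) < ∞, and write m_u := E[u] ∈ U and m_v := E[v] ∈ V for the Bochner means. Then for every x₁ ∈ X, the element w := E[(u(x₁) − m_u(x₁)) · (u − m_u)] of U (a Bochner integral, where u(x₁) denotes ω ↦ u(ω)(x₁)) belongs to dom(T), and for every x₂ ∈ X, (T w)(x₂) = E[(u(x₁) − m_u(x₁)) · (v(x₂) − m_v(x₂))], i.e., T applied to the second argument of the covariance function k_u(x₁, ·) of u yields the cross-covariance function x₂ ↦ Cov(u(x₁), v(x₂)). -/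
/-!
The graph of a closed operator is a closed subspace of `U × V`, and Bochner integrals of
functions taking values a.e. in a closed subspace stay in it. The means `(m_u, m_v)` therefore
lie in the graph, hence so do the centred pairs `(u - m_u, v - m_v)`, their multiples by the
scalar `u(x₁) - m_u(x₁)`, and finally the integral of those multiples, which is the pair
`(w, T w)`. Evaluating `T w` at `x₂` commutes with the integral because point evaluations are
continuous.
-/

open MeasureTheory
open scoped ENNReal

section

variable {Ω : Type*} [MeasurableSpace Ω] {μ : Measure Ω}
  {E F : Type*} [NormedAddCommGroup E] [NormedSpace ℝ E]
  [NormedAddCommGroup F] [NormedSpace ℝ F]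

theorem MeasureTheory.MemLp.integrable_smul {p q : ℝ≥0∞} [ENNReal.HolderTriple p q 1]
    {c : Ω → ℝ} {f : Ω → E} (hc : MemLp c p μ) (hf : MemLp f q μ) :
    Integrable (fun ω => c ω • f ω) μ :=
  memLp_one_iff_integrable.1 (hf.smul hc)

theorem Submodule.integral_mem_of_ae_mem [CompleteSpace E] {S : Submodule ℝ E}
    (hS : IsClosed (S : Set E)) {f : Ω → E} (hf : ∀ᵐ ω ∂μ, f ω ∈ S) : ∫ ω, f ω ∂μ ∈ S := by
  by_cases hfi : Integrable f μ
  · -- the norm on `E ⧸ S` is a norm (not just a seminorm) only via this instance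
    have : IsClosed (S : Set E) := hS
    let q : E →L[ℝ] E ⧸ S := ⟨S.mkQ, S.continuous_mkQ⟩
    have hq : q (∫ ω, f ω ∂μ) = 0 := by
      rw [← q.integral_comp_comm hfi]
      exact integral_eq_zero_of_ae (hf.mono fun ω hω => (Submodule.Quotient.mk_eq_zero S).2 hω)
    exact (Submodule.Quotient.mk_eq_zero S).1 hq
  · simp [integral_undef hfi]

namespace LinearPMap

variable [CompleteSpace E] [CompleteSpace F] {T : E →ₗ.[ℝ] F}

theorem IsClosed.integral_mem_graph (hT : T.IsClosed) {f : Ω → E} {g : Ω → F}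
    (hf : Integrable f μ) (hg : Integrable g μ) (hfg : ∀ᵐ ω ∂μ, (f ω, g ω) ∈ T.graph) :
    (∫ ω, f ω ∂μ, ∫ ω, g ω ∂μ) ∈ T.graph := by
  simpa only [integral_pair hf hg] using T.graph.integral_mem_of_ae_mem hT hfg

theorem IsClosed.integral_smul_mem_graph (hT : T.IsClosed) {p q : ℝ≥0∞} [ENNReal.HolderTriple p q 1]
    {c : Ω → ℝ} {f : Ω → E} {g : Ω → F} (hc : MemLp c p μ) (hf : MemLp f q μ) (hg : MemLp g q μ)
    (hfg : ∀ᵐ ω ∂μ, (f ω, g ω) ∈ T.graph) :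
    (∫ ω, c ω • f ω ∂μ, ∫ ω, c ω • g ω ∂μ) ∈ T.graph :=
  hT.integral_mem_graph (hc.integrable_smul hf) (hc.integrable_smul hg) <|
    hfg.mono fun ω h => by simpa only [Prod.smul_mk] using T.graph.smul_mem (c ω) h

end LinearPMap

variable {X : Type*}

def pointEvalCLM (ι : E →ₗ[ℝ] (X → ℝ)) (x : X) (hx : Continuous fun w => ι w x) : E →L[ℝ] ℝ :=
  ⟨LinearMap.proj x ∘ₗ ι, hx⟩

@[simp]
theorem pointEvalCLM_apply (ι : E →ₗ[ℝ] (X → ℝ)) (x : X) (hx : Continuous fun w => ι w x)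
    (w : E) : pointEvalCLM ι x hx w = ι w x :=
  rfl

theorem integral_apply_of_continuous_eval [CompleteSpace E] (ι : E →ₗ[ℝ] (X → ℝ)) {x : X}
    (hx : Continuous fun w => ι w x) {f : Ω → E} (hf : Integrable f μ) :
    ι (∫ ω, f ω ∂μ) x = ∫ ω, ι (f ω) x ∂μ :=
  ((pointEvalCLM ι x hx).integral_comp_comm hf).symm

end

theorem stmt_3_general {X : Type*} {U V : Type*}
    [NormedAddCommGroup U] [NormedSpace ℝ U] [CompleteSpace U]
    [NormedAddCommGroup V] [NormedSpace ℝ V] [CompleteSpace V]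
    (ιU : U →ₗ[ℝ] (X → ℝ))
    (hevU : ∀ x : X, Continuous fun w : U => ιU w x)
    (ιV : V →ₗ[ℝ] (X → ℝ))
    (hevV : ∀ x : X, Continuous fun w : V => ιV w x)
    (T : U →ₗ.[ℝ] V) (hT : T.IsClosed)
    {Ω : Type*} [MeasurableSpace Ω] (P : Measure Ω) [IsProbabilityMeasure P]
    (u : Ω → U) (v : Ω → V)
    (huv : ∀ᵐ ω ∂P, (u ω, v ω) ∈ T.graph)
    (hu2 : MemLp u 2 P) (hv2 : MemLp v 2 P)
    (x₁ : X) :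
    ∃ hmem : (∫ ω, (ιU (u ω) x₁ - ιU (∫ ω', u ω' ∂P) x₁) • (u ω - ∫ ω', u ω' ∂P) ∂P)
        ∈ T.domain,
      ∀ x₂ : X,
        ιV (T ⟨_, hmem⟩) x₂ =
          ∫ ω, (ιU (u ω) x₁ - ιU (∫ ω', u ω' ∂P) x₁) *
            (ιV (v ω) x₂ - ιV (∫ ω', v ω' ∂P) x₂) ∂P := by
  set mu := ∫ ω, u ω ∂P
  set mv := ∫ ω, v ω ∂P
  have hc : MemLp (fun ω => ιU (u ω) x₁ - ιU mu x₁) 2 P :=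
    ((pointEvalCLM ιU x₁ (hevU x₁)).comp_memLp' hu2).sub (memLp_const _)
  have hu0 : MemLp (fun ω => u ω - mu) 2 P := hu2.sub (memLp_const mu)
  have hv0 : MemLp (fun ω => v ω - mv) 2 P := hv2.sub (memLp_const mv)
  have hmean : (mu, mv) ∈ T.graph :=
    hT.integral_mem_graph (hu2.integrable one_le_two) (hv2.integrable one_le_two) huv
  have hw := hT.integral_smul_mem_graph hc hu0 hv0 (huv.mono fun ω h => T.graph.sub_mem h hmean)
  refine ⟨T.mem_domain_of_mem_graph hw, fun x₂ => ?_⟩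
  rw [← (T.image_iff _).2 hw, integral_apply_of_continuous_eval ιV (hevV x₂)
    (hc.integrable_smul hv0)]
  simp

/-- Part of the covariance computation in the paper's main theorem: `U` and `V` are real
Banach spaces of real-valued functions on `X` (realised by injective linear maps
`ιU`, `ιV` into `X → ℝ` with continuous point evaluations); `T` is a closed linear operator
with `v ω = T (u ω)` a.s.; `u`, `v` are square-Bochner-integrable. Then, for each `x₁`,
the `U`-valued Bochner mean `E[(u(x₁) − m_u(x₁)) • (u − m_u)]` lies in `dom T` and `T` of it,
evaluated at any `x₂`, is the cross-covariance `Cov(u(x₁), v(x₂))`. -/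
theorem stmt_3 {X : Type*} [Nonempty X] {U V : Type*}
    [NormedAddCommGroup U] [NormedSpace ℝ U] [CompleteSpace U]
    [NormedAddCommGroup V] [NormedSpace ℝ V] [CompleteSpace V]
    (ιU : U →ₗ[ℝ] (X → ℝ)) (hιU : Function.Injective ιU)
    (hevU : ∀ x : X, Continuous fun w : U => ιU w x)
    (ιV : V →ₗ[ℝ] (X → ℝ)) (hιV : Function.Injective ιV)
    (hevV : ∀ x : X, Continuous fun w : V => ιV w x)
    (T : U →ₗ.[ℝ] V) (hT : T.IsClosed)
    {Ω : Type*} [MeasurableSpace Ω] (P : Measure Ω) [IsProbabilityMeasure P]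
    (u : Ω → U) (v : Ω → V)
    (huv : ∀ᵐ ω ∂P, (u ω, v ω) ∈ T.graph)
    (hu2 : MemLp u 2 P) (hv2 : MemLp v 2 P)
    (x₁ : X) :
    ∃ hmem : (∫ ω, (ιU (u ω) x₁ - ιU (∫ ω', u ω' ∂P) x₁) • (u ω - ∫ ω', u ω' ∂P) ∂P)
        ∈ T.domain,
      ∀ x₂ : X,
        ιV (T ⟨_, hmem⟩) x₂ =
          ∫ ω, (ιU (u ω) x₁ - ιU (∫ ω', u ω' ∂P) x₁) *
            (ιV (v ω) x₂ - ιV (∫ ω', v ω' ∂P) x₂) ∂P :=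
  stmt_3_general ιU hevU ιV hevV T hT P u v huv hu2 hv2 x₁
end

section
/- Let U and V be real Banach spaces, let T : dom(T) ⊆ U → V be a closed, densely defined linear operator, and suppose T has a densely defined adjoint: there is a subspace D of the continuous dual V′ of V, dense in V′ in the dual norm, such that for every ψ ∈ D there exists φ ∈ U′ with φ(w) = ψ(T w) for all w ∈ dom(T). Let (Ω, Σ, P) be a probability space, let u : Ω → U be a strongly measurable random variable whose law is a Gaussian measure on U (i.e., for every continuous linear functional L : U → ℝ, the law of L(u) is a Gaussian measure on ℝ, possibly degenerate), suppose u(ω) ∈ dom(T) P-a.s., set v(ω) := T(u(ω)), and suppose ∫_Ω ‖v(ω)‖_V^n dP(ω) < ∞ for every n ∈ ℕ. Then for every continuous linear functional ψ : V → ℝ and every integer n ≥ 3, the n-th cumulant of the real random variable ψ(v) vanishes: Σ_{P ∈ 𝒫(n)} (−1)^{|P|−1} (|P|−1)! Π_{B ∈ P} E[(ψ(v))^{|B|}] = 0, where 𝒫(n) is the set of all partitions of {1, …, n}. -/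
/-!
For `ψ ∈ D` pick `φ ∈ U′` with `φ = ψ ∘ T` on `dom T`; then `ψ (v) = φ (u)` almost surely, so
`ψ (v)` is Gaussian and its moments `μ k` satisfy `μ (k+2) = μ 1 μ (k+1) + σ² (k+1) μ k` with
`σ² = μ 2 - μ 1 ²`: differentiate `g' = (m + σ² s) g` for the moment generating function
`g s = exp (m s + σ² s² / 2)` at `0`. Since `v` has all moments, each moment of `ψ (v)` depends
continuously on `ψ`, so this closed condition passes from the dense set `D` to all of `V′`.

For the combinatorics, let `G = ∑ μ n Xⁿ / n!` with `μ 0 = 1` and let `t n / n!` be the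
coefficients of `1 / G`. Removing one block from a partition gives
`∑_π (-1)^|π| |π|! ∏ μ |B| = t n`, and removing the block containing a fixed point gives
`κ (n+1) = ∑ k, C(n, k) μ (k+1) t (n-k)`, so `κ (n+1) / n!` are the coefficients of `G' / G`.
The recurrence says `G' = (μ 1 + σ² X) G`, so all cumulants of order at least three vanish.
-/

open Finset

namespace Finpartition

variable {α : Type*} [DecidableEq α] {s B : Finset α}

lemma sup_parts_erase (P : Finpartition s) (hB : B ∈ P.parts) :
    (P.parts.erase B).sup id = s \ B := by
  apply le_antisymm
  · refine Finset.sup_le fun C hC => ?_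
    have hCP := mem_of_mem_erase hC
    exact subset_sdiff.2 ⟨P.le hCP, P.disjoint hCP hB (ne_of_mem_erase hC)⟩
  · intro x hx
    obtain ⟨hxs, hxB⟩ := mem_sdiff.1 hx
    obtain ⟨C, hC, hxC⟩ := P.exists_mem hxs
    exact le_sup (f := id) (mem_erase.2 ⟨fun h : C = B => hxB (h ▸ hxC), hC⟩) hxC

def erasePart (P : Finpartition s) (hB : B ∈ P.parts) : Finpartition (s \ B) :=
  P.ofSubset (erase_subset _ _) (P.sup_parts_erase hB)

def insertPart (hB : B.Nonempty) (hBs : B ⊆ s) (Q : Finpartition (s \ B)) : Finpartition s :=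
  Q.extend hB.ne_empty sdiff_disjoint (by rw [sup_eq_union, sdiff_union_of_subset hBs])

lemma notMem_parts_of_sdiff (hB : B.Nonempty) (Q : Finpartition (s \ B)) : B ∉ Q.parts :=
  fun h => (mem_sdiff.1 (Q.le h hB.choose_spec)).2 hB.choose_spec

lemma sum_sum_parts_erase {M : Type*} [AddCommMonoid M] (F : Finset α → Finset (Finset α) → M) :
    ∑ P : Finpartition s, ∑ B ∈ P.parts, F B (P.parts.erase B)
      = ∑ B ∈ s.powerset.erase ∅, ∑ Q : Finpartition (s \ B), F B Q.parts := by
  rw [sum_comm' (t' := s.powerset.erase ∅)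
    (s' := fun B => univ.filter fun P : Finpartition s => B ∈ P.parts)]
  · refine sum_congr rfl fun B hB => ?_
    obtain ⟨hB, hBs⟩ := mem_erase.1 hB
    replace hB := nonempty_iff_ne_empty.2 hB
    refine sum_bij' (fun P hP => P.erasePart (mem_filter.1 hP).2)
      (fun Q _ => insertPart hB (mem_powerset.1 hBs) Q) (fun _ _ => mem_univ _)
      (fun Q _ => mem_filter.2 ⟨mem_univ _, mem_insert_self _ _⟩) (fun P hP => ?_)
      (fun Q _ => ?_) (fun P hP => rfl)
    · ext1; exact insert_erase (mem_filter.1 hP).2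
    · ext1; exact erase_insert (notMem_parts_of_sdiff hB Q)
  · intro P B
    simp only [mem_univ, true_and, mem_filter, mem_erase, mem_powerset]
    exact ⟨fun h => ⟨h, P.ne_empty h, P.le h⟩, fun h => h.1⟩

end Finpartition

lemma sum_mul_mul_prod_erase {R ι : Type*} [CommSemiring R] [DecidableEq ι] (S : Finset ι)
    (g : ι → R) (c : R) :
    ∑ i ∈ S, g i * (c * ∏ j ∈ S.erase i, g j) = #S * c * ∏ i ∈ S, g i := by
  rw [sum_congr rfl fun i hi => by rw [mul_left_comm, mul_prod_erase S g hi], sum_const,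
    nsmul_eq_mul, mul_assoc]

section Cumulants

open Nat

variable {R : Type*} [CommRing R] (μ : ℕ → R)

/-- When `μ 0 = 1`, `invExpCoeff μ n / n!` is the `n`-th coefficient of the inverse of the
exponential generating series `∑ μ n Xⁿ / n!`. -/
def invExpCoeff : ℕ → R
  | 0 => 1
  | n + 1 => -∑ k ∈ range (n + 1), ((n + 1).choose (k + 1) : R) * μ (k + 1) * invExpCoeff (n - k)

lemma invExpCoeff_zero : invExpCoeff μ 0 = 1 := by rw [invExpCoeff]

lemma invExpCoeff_succ (n : ℕ) : invExpCoeff μ (n + 1) =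
    -∑ k ∈ range (n + 1), ((n + 1).choose (k + 1) : R) * μ (k + 1) * invExpCoeff μ (n - k) := by
  rw [invExpCoeff]

variable {μ}

lemma sum_choose_mul_invExpCoeff_eq_zero (hμ0 : μ 0 = 1) {n : ℕ} (hn : n ≠ 0) :
    ∑ k ∈ range (n + 1), (n.choose k : R) * μ k * invExpCoeff μ (n - k) = 0 := by
  obtain ⟨n, rfl⟩ : ∃ m, n = m + 1 := ⟨n - 1, by omega⟩
  rw [sum_range_succ', Nat.sub_zero, invExpCoeff_succ]
  simp [hμ0]

lemma sum_choose_mul_succ_invExpCoeff_eq_zero (hμ0 : μ 0 = 1) {c : R}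
    (hrec : ∀ k : ℕ, μ (k + 2) = μ 1 * μ (k + 1) + c * (k + 1) * μ k) {n : ℕ} (hn : 2 ≤ n) :
    ∑ k ∈ range (n + 1), (n.choose k : R) * μ (k + 1) * invExpCoeff μ (n - k) = 0 := by
  obtain ⟨n, rfl⟩ : ∃ m, n = m + 1 := ⟨n - 1, by omega⟩
  have hterm : ∀ k ∈ range (n + 1),
      ((n + 1).choose (k + 1) : R) * μ (k + 1 + 1) * invExpCoeff μ (n + 1 - (k + 1))
        = μ 1 * (((n + 1).choose (k + 1) : R) * μ (k + 1) * invExpCoeff μ (n - k))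
          + c * (n + 1) * ((n.choose k : R) * μ k * invExpCoeff μ (n - k)) := by
    intro k _
    rw [Nat.add_sub_add_right]
    have hchoose : ((n + 1).choose (k + 1) : R) * (k + 1) = (n + 1) * n.choose k := by
      simpa using congrArg (Nat.cast : ℕ → R) (add_one_mul_choose_eq n k).symm
    rw [hrec k]
    linear_combination c * μ k * invExpCoeff μ (n - k) * hchoose
  rw [sum_range_succ', sum_congr rfl hterm,
    sum_add_distrib, ← mul_sum, ← mul_sum, ← neg_neg (∑ k ∈ _, _ * μ (k + 1) * _),
    ← invExpCoeff_succ, sum_choose_mul_invExpCoeff_eq_zero hμ0 (by omega)]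
  simp

variable {α : Type*} [DecidableEq α]

lemma sum_finpartition_eq_invExpCoeff (hμ0 : μ 0 = 1) (s : Finset α) :
    ∑ P : Finpartition s, (-1) ^ #P.parts * ((#P.parts)! : R) * ∏ B ∈ P.parts, μ #B
      = invExpCoeff μ #s := by
  induction s using strongInduction with
  | _ s ih =>
  rcases s.eq_empty_or_nonempty with rfl | hs
  · rw [card_empty, invExpCoeff_zero]
    refine (Fintype.sum_unique (ι := Finpartition (⊥ : Finset α)) _).trans ?_
    rw [Finpartition.parts_eq_empty_iff.2 rfl]
    simp
  have hpart : ∀ P : Finpartition s,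
      (-1) ^ #P.parts * ((#P.parts)! : R) * ∏ B ∈ P.parts, μ #B
        = ∑ B ∈ P.parts, μ #B *
          (-((-1) ^ #(P.parts.erase B) * ((#(P.parts.erase B))! : R)) *
            ∏ C ∈ P.parts.erase B, μ #C) := by
    intro P
    obtain ⟨c, hc⟩ : ∃ c, #P.parts = c + 1 :=
      exists_eq_add_one.2 (P.parts_nonempty hs.ne_empty).card_pos
    rw [sum_congr rfl fun B hB => by rw [card_erase_of_mem hB], sum_mul_mul_prod_erase, hc,
      Nat.add_sub_cancel, factorial_succ]
    push_cast
    ring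
  simp_rw [hpart]
  rw [Finpartition.sum_sum_parts_erase (fun B Q => μ #B * (-((-1) ^ #Q * ((#Q)! : R)) *
    ∏ C ∈ Q, μ #C))]
  have hinner : ∀ B ∈ s.powerset.erase ∅, ∑ Q : Finpartition (s \ B),
      μ #B * (-((-1) ^ #Q.parts * ((#Q.parts)! : R)) * ∏ C ∈ Q.parts, μ #C)
        = -(μ #B * invExpCoeff μ (#s - #B)) := by
    intro B hB
    obtain ⟨hB, hBs⟩ := mem_erase.1 hB
    rw [mem_powerset] at hBs
    rw [← card_sdiff_of_subset hBs, ← ih _ (sdiff_ssubset hBs (nonempty_iff_ne_empty.2 hB)),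
      mul_sum, ← sum_neg_distrib]
    exact sum_congr rfl fun Q _ => by ring
  rw [sum_congr rfl hinner, sum_neg_distrib, sum_erase_eq_sub (empty_mem_powerset s),
    sum_powerset_apply_card (fun k => μ k * invExpCoeff μ (#s - k))]
  simp_rw [nsmul_eq_mul, ← mul_assoc]
  rw [sum_choose_mul_invExpCoeff_eq_zero hμ0 hs.card_pos.ne']
  simp [hμ0]

variable (μ) in
def cumulantOfMoments (s : Finset α) : R :=
  ∑ P : Finpartition s, (-1) ^ (#P.parts - 1) * ((#P.parts - 1)! : R) * ∏ B ∈ P.parts, μ #B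

lemma cumulantOfMoments_insert (hμ0 : μ 0 = 1) {a : α} {s : Finset α} (ha : a ∉ s) :
    cumulantOfMoments μ (insert a s)
      = ∑ k ∈ range (#s + 1), ((#s).choose k : R) * μ (k + 1) * invExpCoeff μ (#s - k) := by
  have hpart : ∀ P : Finpartition (insert a s),
      (-1) ^ (#P.parts - 1) * ((#P.parts - 1)! : R) * ∏ B ∈ P.parts, μ #B
        = ∑ B ∈ P.parts, (if a ∈ B then μ #B else 0) *
          ((-1) ^ #(P.parts.erase B) * ((#(P.parts.erase B))! : R) *
            ∏ C ∈ P.parts.erase B, μ #C) := by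
    intro P
    have haP : P.part a ∈ P.parts := P.part_mem.2 (mem_insert_self a s)
    rw [sum_eq_single_of_mem _ haP fun B hB hBa => ?_, if_pos (P.mem_part (mem_insert_self a s)),
      card_erase_of_mem haP, ← mul_prod_erase _ (fun B => μ #B) haP]
    · ring
    · rw [if_neg fun haB => hBa (P.part_eq_of_mem hB haB).symm, zero_mul]
  simp_rw [cumulantOfMoments, hpart]
  rw [Finpartition.sum_sum_parts_erase (fun B Q => (if a ∈ B then μ #B else 0) *
    ((-1) ^ #Q * ((#Q)! : R) * ∏ C ∈ Q, μ #C))]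
  have hinner : ∀ B ∈ (insert a s).powerset, ∑ Q : Finpartition (insert a s \ B),
      (if a ∈ B then μ #B else 0) * ((-1) ^ #Q.parts * ((#Q.parts)! : R) * ∏ C ∈ Q.parts, μ #C)
        = (if a ∈ B then μ #B else 0) * invExpCoeff μ (#s + 1 - #B) := by
    intro B hB
    rw [← mul_sum, sum_finpartition_eq_invExpCoeff hμ0, card_sdiff_of_subset (mem_powerset.1 hB),
      card_insert_of_notMem ha]
  rw [sum_congr rfl fun B hB => hinner B (mem_of_mem_erase hB), sum_erase _ (by simp),
    sum_powerset_insert ha]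
  have hsub : ∀ t ∈ s.powerset, a ∉ t := fun t ht hat => ha (mem_powerset.1 ht hat)
  rw [sum_eq_zero fun t ht => by rw [if_neg (hsub t ht), zero_mul], zero_add,
    sum_congr rfl fun t ht => by
      rw [if_pos (mem_insert_self a t), card_insert_of_notMem (hsub t ht), Nat.add_sub_add_right],
    sum_powerset_apply_card (fun k => μ (k + 1) * invExpCoeff μ (#s - k))]
  simp_rw [nsmul_eq_mul, mul_assoc]

theorem cumulantOfMoments_eq_zero (hμ0 : μ 0 = 1) {c : R}
    (hrec : ∀ k : ℕ, μ (k + 2) = μ 1 * μ (k + 1) + c * (k + 1) * μ k) {s : Finset α}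
    (hs : 3 ≤ #s) : cumulantOfMoments μ s = 0 := by
  obtain ⟨a, ha⟩ := card_pos.1 (by omega : 0 < #s)
  rw [← insert_erase ha, cumulantOfMoments_insert hμ0 (notMem_erase a s)]
  exact sum_choose_mul_succ_invExpCoeff_eq_zero hμ0 hrec (by rw [card_erase_of_mem ha]; omega)

end Cumulants

open MeasureTheory ProbabilityTheory
open scoped NNReal ENNReal

open scoped ContDiff in
lemma iteratedDeriv_add_two_of_deriv_eq {𝕜 : Type*} [NontriviallyNormedField 𝕜] {f : 𝕜 → 𝕜}
    {a b : 𝕜} (hf : ContDiff 𝕜 ∞ f) (hf' : ∀ t, deriv f t = (a + b * t) * f t) (k : ℕ) (t : 𝕜) :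
    iteratedDeriv (k + 2) f t
      = (a + b * t) * iteratedDeriv (k + 1) f t + (k + 1) * b * iteratedDeriv k f t := by
  have hd : ∀ n t, HasDerivAt (iteratedDeriv n f) (iteratedDeriv (n + 1) f t) t := fun n t => by
    rw [iteratedDeriv_succ]
    exact (hf.differentiable_iteratedDeriv n (mod_cast WithTop.coe_lt_top _) t).hasDerivAt
  have hlin : ∀ t, HasDerivAt (fun t => a + b * t) b t := fun t => by
    simpa using ((hasDerivAt_id t).const_mul b).const_add a
  induction k generalizing t with
  | zero =>
    have h1 : iteratedDeriv 1 f = fun t => (a + b * t) * iteratedDeriv 0 f t := by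
      rw [iteratedDeriv_one, iteratedDeriv_zero]
      exact funext hf'
    calc iteratedDeriv (0 + 2) f t = deriv (fun t => (a + b * t) * iteratedDeriv 0 f t) t := by
          rw [iteratedDeriv_succ, h1]
      _ = _ := ((hlin t).mul (hd 0 t)).deriv
      _ = _ := by push_cast; ring
  | succ k ih =>
    calc iteratedDeriv (k + 1 + 2) f t
        = deriv (fun t => (a + b * t) * iteratedDeriv (k + 1) f t
            + (k + 1) * b * iteratedDeriv k f t) t := by
          rw [iteratedDeriv_succ, funext ih]
      _ = _ := (((hlin t).mul (hd (k + 1) t)).add ((hd k t).const_mul ((k + 1) * b))).deriv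
      _ = _ := by push_cast; ring

lemma integral_pow_add_two_gaussianReal (m : ℝ) (v : ℝ≥0) (k : ℕ) :
    ∫ x, x ^ (k + 2) ∂gaussianReal m v
      = m * ∫ x, x ^ (k + 1) ∂gaussianReal m v + (k + 1) * v * ∫ x, x ^ k ∂gaussianReal m v := by
  have hmgf : ∀ n, ∫ x, x ^ n ∂gaussianReal m v
      = iteratedDeriv n (fun t => Real.exp (m * t + v * t ^ 2 / 2)) 0 := fun n => by
    rw [← mgf_id_gaussianReal, iteratedDeriv_mgf_zero (by simp [integrableExpSet_id_gaussianReal])]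
    rfl
  simp_rw [hmgf]
  rw [iteratedDeriv_add_two_of_deriv_eq (a := m) (b := v) (by fun_prop) (fun t => ?_) k 0]
  · simp
  · have h : HasDerivAt (fun t => m * t + v * t ^ 2 / 2) (m + v * t) t := by
      refine (((hasDerivAt_id t).const_mul m).add
        (((hasDerivAt_pow 2 t).const_mul (v : ℝ)).div_const 2)).congr_deriv ?_
      norm_num
      ring
    rw [h.exp.deriv, mul_comm]

lemma integral_pow_add_two_of_map_eq_gaussianReal {Ω : Type*} [MeasurableSpace Ω]
    {P : Measure Ω} [IsProbabilityMeasure P] {X : Ω → ℝ} (hX : AEMeasurable X P) {m : ℝ}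
    {v : ℝ≥0} (hXv : P.map X = gaussianReal m v) (k : ℕ) :
    ∫ ω, X ω ^ (k + 2) ∂P = (∫ ω, X ω ^ 1 ∂P) * (∫ ω, X ω ^ (k + 1) ∂P)
      + ((∫ ω, X ω ^ 2 ∂P) - (∫ ω, X ω ^ 1 ∂P) ^ 2) * (k + 1) * ∫ ω, X ω ^ k ∂P := by
  have hM : ∀ n : ℕ, ∫ ω, X ω ^ n ∂P = ∫ x, x ^ n ∂gaussianReal m v := fun n => by
    rw [← hXv, integral_map hX (by fun_prop)]
  have hM1 : ∫ x, x ^ 1 ∂gaussianReal m v = m := by simp [integral_id_gaussianReal]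
  have hM2 : ∫ x, x ^ 2 ∂gaussianReal m v = m ^ 2 + v := by
    simpa [hM1, sq] using integral_pow_add_two_gaussianReal m v 0
  simp only [hM]
  rw [integral_pow_add_two_gaussianReal, hM1, hM2]
  ring

section Moments

variable {Ω V : Type*} [MeasurableSpace Ω] [NormedAddCommGroup V] {P : Measure Ω} {v : Ω → V}

lemma integrable_norm_pow_of_lintegral_lt_top (hv : AEStronglyMeasurable v P) {n : ℕ}
    (h : ∫⁻ ω, (‖v ω‖₊ : ℝ≥0∞) ^ n ∂P < ⊤) : Integrable (fun ω => ‖v ω‖ ^ n) P := by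
  refine ⟨hv.norm.pow n, ?_⟩
  simpa [HasFiniteIntegral, enorm] using h

lemma continuous_integral_apply_pow [NormedSpace ℝ V] (hv : AEStronglyMeasurable v P) {k : ℕ}
    (hint : Integrable (fun ω => ‖v ω‖ ^ k) P) :
    Continuous fun ψ : V →L[ℝ] ℝ => ∫ ω, ψ (v ω) ^ k ∂P := by
  refine continuous_iff_continuousAt.2 fun ψ₀ => continuousAt_of_dominated
    (bound := fun ω => ((‖ψ₀‖ + 1) * ‖v ω‖) ^ k)
    (Filter.Eventually.of_forall fun ψ =>
      ((continuous_pow k).comp ψ.continuous).comp_aestronglyMeasurable hv)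
    ?_ (by simpa [mul_pow] using hint.const_mul ((‖ψ₀‖ + 1) ^ k))
    (ae_of_all _ fun ω => ((ContinuousLinearMap.apply ℝ ℝ (v ω)).continuous.pow k).continuousAt)
  filter_upwards [Metric.ball_mem_nhds ψ₀ one_pos] with ψ hψ
  refine ae_of_all _ fun ω => ?_
  have hψ' : ‖ψ‖ ≤ ‖ψ₀‖ + 1 := by
    have := norm_sub_norm_le ψ ψ₀
    rw [Metric.mem_ball, dist_eq_norm] at hψ
    linarith
  rw [norm_pow]
  gcongr
  exact (ψ.le_opNorm _).trans (by gcongr)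

end Moments

lemma LinearPMap.apply_eq_of_mem_graph {R E F G : Type*} [Ring R] [AddCommGroup E] [Module R E]
    [AddCommGroup F] [Module R F] (T : E →ₗ.[R] F) {f : E → G} {g : F → G}
    (h : ∀ (w : E) (hw : w ∈ T.domain), f w = g (T ⟨w, hw⟩)) {x : E} {y : F}
    (hxy : (x, y) ∈ T.graph) : f x = g y := by
  obtain ⟨w, hwx : (w : E) = x, hwy : T w = y⟩ := T.mem_graph_iff.1 hxy
  rw [← hwx, ← hwy]
  exact h w w.2

theorem stmt_6_general {U V : Type*}
    [NormedAddCommGroup U] [NormedSpace ℝ U]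
    [NormedAddCommGroup V] [NormedSpace ℝ V]
    (T : U →ₗ.[ℝ] V)
    (D : Submodule ℝ (V →L[ℝ] ℝ)) (hD : Dense (D : Set (V →L[ℝ] ℝ)))
    (hadj : ∀ ψ ∈ D, ∃ φ : U →L[ℝ] ℝ, ∀ (w : U) (hw : w ∈ T.domain), φ w = ψ (T ⟨w, hw⟩))
    {Ω : Type*} [MeasurableSpace Ω] (P : Measure Ω) [IsProbabilityMeasure P]
    (u : Ω → U)
    (hu_gauss : ∀ L : U →L[ℝ] ℝ, ∃ (m : ℝ) (s : NNReal),
      P.map (fun ω => L (u ω)) = ProbabilityTheory.gaussianReal m s)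
    (v : Ω → V) (hv_meas : AEStronglyMeasurable v P)
    (huv : ∀ᵐ ω ∂P, (u ω, v ω) ∈ T.graph)
    (hv_mom : ∀ n : ℕ, ∫⁻ ω, (‖v ω‖₊ : ENNReal) ^ n ∂P < ⊤)
    (ψ : V →L[ℝ] ℝ) (n : ℕ) (hn : 3 ≤ n) :
    ∑ π : Finpartition (Finset.univ : Finset (Fin n)),
      (-1 : ℝ) ^ (π.parts.card - 1) * (Nat.factorial (π.parts.card - 1)) *
        ∏ B ∈ π.parts, ∫ ω, (ψ (v ω)) ^ B.card ∂P = 0 := by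
  have hcont : ∀ k, Continuous fun ψ : V →L[ℝ] ℝ => ∫ ω, ψ (v ω) ^ k ∂P := fun k =>
    continuous_integral_apply_pow hv_meas
      (integrable_norm_pow_of_lintegral_lt_top hv_meas (hv_mom k))
  have hrec : ∀ ψ : V →L[ℝ] ℝ, ∀ k : ℕ, ∫ ω, ψ (v ω) ^ (k + 2) ∂P
      = (∫ ω, ψ (v ω) ^ 1 ∂P) * (∫ ω, ψ (v ω) ^ (k + 1) ∂P)
        + ((∫ ω, ψ (v ω) ^ 2 ∂P) - (∫ ω, ψ (v ω) ^ 1 ∂P) ^ 2) * (k + 1) * ∫ ω, ψ (v ω) ^ k ∂P := by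
    refine hD.induction (fun ψ hψ => ?_) ?_
    · obtain ⟨φ, hφ⟩ := hadj ψ hψ
      obtain ⟨m, s, hφu⟩ := hu_gauss φ
      have hψv : (fun ω => ψ (v ω)) =ᵐ[P] fun ω => φ (u ω) := by
        filter_upwards [huv] with ω hω
        exact (T.apply_eq_of_mem_graph hφ hω).symm
      exact integral_pow_add_two_of_map_eq_gaussianReal
        (ψ.continuous.comp_aestronglyMeasurable hv_meas).aemeasurable
        ((Measure.map_congr hψv).trans hφu)
    · rw [Set.ofPred_forall]
      exact isClosed_iInter fun k => isClosed_eq (hcont _) (((hcont 1).mul (hcont _)).add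
        ((((hcont 2).sub ((hcont 1).pow 2)).mul_const _).mul (hcont k)))
  show cumulantOfMoments (fun k => ∫ ω, ψ (v ω) ^ k ∂P) Finset.univ = 0
  exact cumulantOfMoments_eq_zero (by simp) (hrec ψ) (by simpa using hn)

/-- Cumulant vanishing step of part (c) of the paper's main theorem: if `T` is a closed,
densely defined operator with densely defined adjoint, `u` is a Gaussian random element of
`U` with `u ω ∈ dom T` a.s., `v = T u`, and `v` has finite moments of all orders, then for
every continuous linear functional `ψ` on `V` and every `n ≥ 3`, the `n`-th cumulant
`∑_{π ∈ 𝒫(n)} (−1)^{|π|−1} (|π|−1)! ∏_{B ∈ π} E[(ψ v)^{|B|}]` of `ψ (v)` vanishes. -/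
theorem stmt_6 {U V : Type*}
    [NormedAddCommGroup U] [NormedSpace ℝ U] [CompleteSpace U]
    [NormedAddCommGroup V] [NormedSpace ℝ V] [CompleteSpace V]
    (T : U →ₗ.[ℝ] V) (hT : T.IsClosed) (hTdense : Dense (T.domain : Set U))
    (D : Submodule ℝ (V →L[ℝ] ℝ)) (hD : Dense (D : Set (V →L[ℝ] ℝ)))
    (hadj : ∀ ψ ∈ D, ∃ φ : U →L[ℝ] ℝ, ∀ (w : U) (hw : w ∈ T.domain), φ w = ψ (T ⟨w, hw⟩))
    {Ω : Type*} [MeasurableSpace Ω] (P : Measure Ω) [IsProbabilityMeasure P]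
    (u : Ω → U) (hu_meas : StronglyMeasurable u)
    (hu_gauss : ∀ L : U →L[ℝ] ℝ, ∃ (m : ℝ) (s : NNReal),
      P.map (fun ω => L (u ω)) = ProbabilityTheory.gaussianReal m s)
    (v : Ω → V) (hv_meas : AEStronglyMeasurable v P)
    (huv : ∀ᵐ ω ∂P, (u ω, v ω) ∈ T.graph)
    (hv_mom : ∀ n : ℕ, ∫⁻ ω, (‖v ω‖₊ : ENNReal) ^ n ∂P < ⊤)
    (ψ : V →L[ℝ] ℝ) (n : ℕ) (hn : 3 ≤ n) :
    ∑ π : Finpartition (Finset.univ : Finset (Fin n)),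
      (-1 : ℝ) ^ (π.parts.card - 1) * (Nat.factorial (π.parts.card - 1)) *
        ∏ B ∈ π.parts, ∫ ω, (ψ (v ω)) ^ B.card ∂P = 0 :=
  stmt_6_general T D hD hadj P u hu_gauss v hv_meas huv hv_mom ψ n hn
end
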